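/- Let ε₁,…,εₙ be i.i.d. Rademacher random variables (taking values ±1 with probability 1/2) and let B ⊆ ℝⁿ be a finite nonempty set. Then E[sup_{b∈B} Σᵢ εᵢ bᵢ] ≤ (max_{b∈B} ‖b‖₂) · √(2 log |B|). -/

import Mathlib

/-!
Each `∑ i, εᵢ bᵢ` is sub-Gaussian with variance proxy `‖b‖²`: a Rademacher variable has
moment-generating function `cosh t ≤ exp (t² / 2)`, and variance proxies add over independent
summands. If `M` is the maximum of `N` variables with variance proxy `σ²`, then Jensen's inequality
and bounding the maximum of the exponentials by their sum give
`exp (t E[M]) ≤ E[exp (t M)] ≤ N exp (σ² t² / 2)` for every `t > 0`; optimising in `t` yields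
`E[M] ≤ σ √(2 log N)`.
-/

open MeasureTheory ProbabilityTheory
open scoped ENNReal NNReal

lemma Real.exp_mul_sup'_le_sum {ι : Type*} {s : Finset ι} (hs : s.Nonempty) (f : ι → ℝ) (t : ℝ) :
    Real.exp (t * s.sup' hs f) ≤ ∑ i ∈ s, Real.exp (t * f i) := by
  obtain ⟨i, hi, hmax⟩ := Finset.exists_mem_eq_sup' hs f
  rw [hmax]
  exact Finset.single_le_sum (f := fun j ↦ Real.exp (t * f j))
    (fun j _ ↦ (Real.exp_pos _).le) hi

lemma le_mul_sqrt_of_forall_mul_le {a L σ : ℝ} (hσ : 0 ≤ σ) (hL : 0 ≤ L)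
    (h : ∀ t > 0, t * a ≤ L + σ ^ 2 * t ^ 2 / 2) : a ≤ σ * √(2 * L) := by
  rcases le_or_gt a 0 with ha | ha
  · exact ha.trans (by positivity)
  rcases hσ.eq_or_lt with rfl | hσ
  · have := h ((L + 1) / a) (by positivity)
    rw [div_mul_cancel₀ _ ha.ne'] at this
    linarith
  · -- `t = a / σ²` minimises the right-hand side minus the left-hand side.
    have := h (a / σ ^ 2) (by positivity)
    rw [← Real.sqrt_sq hσ.le, ← Real.sqrt_mul (sq_nonneg _), Real.le_sqrt' ha]
    field_simp at this
    nlinarith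

namespace ProbabilityTheory

variable {Ω : Type*} [MeasurableSpace Ω] {μ : Measure Ω}

lemma exp_mul_integral_le_mgf [IsProbabilityMeasure μ] {X : Ω → ℝ} (hX : Integrable X μ) {t : ℝ}
    (hexp : Integrable (fun ω ↦ Real.exp (t * X ω)) μ) :
    Real.exp (t * μ[X]) ≤ mgf X μ t := by
  rw [← integral_const_mul]
  exact convexOn_exp.map_integral_le Real.continuous_exp.continuousOn isClosed_univ
    (ae_of_all _ fun _ ↦ Set.mem_univ _) (hX.const_mul t) hexp

namespace HasSubgaussianMGF

variable {X : Ω → ℝ} {c : ℝ≥0}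

lemma mono (h : HasSubgaussianMGF X c μ) {d : ℝ≥0} (hcd : c ≤ d) : HasSubgaussianMGF X d μ where
  integrable_exp_mul := h.integrable_exp_mul
  mgf_le t := (h.mgf_le t).trans <| Real.exp_le_exp.mpr <| by gcongr

lemma mul_const (h : HasSubgaussianMGF X c μ) (r : ℝ) :
    HasSubgaussianMGF (fun ω ↦ X ω * r) (‖r‖₊ ^ 2 * c) μ where
  integrable_exp_mul t := by
    simpa only [mul_assoc, mul_comm r] using h.integrable_exp_mul (t * r)
  mgf_le t := by
    simp_rw [mul_comm _ r]
    rw [mgf_const_mul]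
    refine (h.mgf_le (r * t)).trans_eq ?_
    push_cast
    rw [Real.norm_eq_abs, sq_abs]
    ring_nf

end HasSubgaussianMGF

lemma hasSubgaussianMGF_id_rademacher :
    HasSubgaussianMGF id 1
      ((1 / 2 : ℝ≥0∞) • Measure.dirac (1 : ℝ) + (1 / 2 : ℝ≥0∞) • Measure.dirac (-1 : ℝ)) := by
  have hdirac (x t : ℝ) : Integrable (fun y : ℝ ↦ Real.exp (t * id y))
      ((1 / 2 : ℝ≥0∞) • Measure.dirac x) :=
    (integrable_dirac (by simp)).smul_measure (by simp)
  refine ⟨fun t ↦ (hdirac 1 t).add_measure (hdirac (-1) t), fun t ↦ ?_⟩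
  rw [mgf_add_measure (hdirac 1 t) (hdirac (-1) t), mgf_smul_measure, mgf_smul_measure,
    mgf_dirac Measure.map_id, mgf_dirac Measure.map_id]
  calc _ = Real.cosh t := by rw [Real.cosh_eq]; simp; ring
    _ ≤ _ := by simpa using Real.cosh_le_exp_half_sq t

lemma hasSubgaussianMGF_sum_mul_of_iIndepFun {ι : Type*} [Fintype ι] {X : ι → Ω → ℝ}
    (hindep : iIndepFun X μ) (h : ∀ i, HasSubgaussianMGF (X i) 1 μ) (b : EuclideanSpace ℝ ι) :
    HasSubgaussianMGF (fun ω ↦ ∑ i, X i ω * b i) (‖b‖₊ ^ 2) μ := by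
  have hsum := HasSubgaussianMGF.sum_of_iIndepFun (s := Finset.univ)
    (hindep.comp (fun i x ↦ x * b i) fun i ↦ measurable_mul_const (b i))
    fun i _ ↦ (h i).mul_const (b i)
  rwa [EuclideanSpace.nnnorm_eq, NNReal.sq_sqrt, ← Finset.sum_congr rfl fun i _ ↦ mul_one _]

lemma integral_sup'_le_of_hasSubgaussianMGF [IsProbabilityMeasure μ] {ι : Type*} {s : Finset ι}
    (hs : s.Nonempty) {X : ι → Ω → ℝ} {σ : ℝ≥0} (h : ∀ i ∈ s, HasSubgaussianMGF (X i) (σ ^ 2) μ) :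
    ∫ ω, s.sup' hs (X · ω) ∂μ ≤ σ * √(2 * Real.log s.card) := by
  set Y : Ω → ℝ := fun ω ↦ s.sup' hs (X · ω)
  have hY : Integrable Y μ := by
    have : Integrable (s.sup' hs X) μ := Finset.sup'_induction hs X (p := (Integrable · μ))
      (fun _ hf _ hg ↦ hf.sup hg) fun i hi ↦ (h i hi).integrable
    exact this.congr (ae_of_all _ fun ω ↦ Finset.sup'_apply hs X ω)
  have hsum (t : ℝ) : Integrable (fun ω ↦ ∑ i ∈ s, Real.exp (t * X i ω)) μ :=
    integrable_finsetSum s fun i hi ↦ (h i hi).integrable_exp_mul t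
  have hexpY (t : ℝ) : Integrable (fun ω ↦ Real.exp (t * Y ω)) μ := by
    refine (hsum t).mono' (by fun_prop) (ae_of_all _ fun ω ↦ ?_)
    rw [Real.norm_of_nonneg (Real.exp_pos _).le]
    exact Real.exp_mul_sup'_le_sum hs _ t
  refine le_mul_sqrt_of_forall_mul_le σ.2 (Real.log_natCast_nonneg _) fun t _ ↦ ?_
  have hcard : (0 : ℝ) < s.card := by exact_mod_cast hs.card_pos
  have hmgf : Real.exp (t * μ[Y]) ≤ s.card * Real.exp (σ ^ 2 * t ^ 2 / 2) :=
    calc Real.exp (t * μ[Y]) ≤ mgf Y μ t := exp_mul_integral_le_mgf hY (hexpY t)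
      _ ≤ ∑ i ∈ s, mgf (X i) μ t := by
        simp only [mgf]
        rw [← integral_finsetSum s fun i hi ↦ (h i hi).integrable_exp_mul t]
        exact integral_mono (hexpY t) (hsum t) fun ω ↦ Real.exp_mul_sup'_le_sum hs _ t
      _ ≤ ∑ _i ∈ s, Real.exp (σ ^ 2 * t ^ 2 / 2) :=
        Finset.sum_le_sum fun i hi ↦ by exact_mod_cast (h i hi).mgf_le t
      _ = s.card * Real.exp (σ ^ 2 * t ^ 2 / 2) := by rw [Finset.sum_const, nsmul_eq_mul]
  rwa [← Real.le_log_iff_exp_le (by positivity), Real.log_mul hcard.ne' (Real.exp_ne_zero _),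
    Real.log_exp] at hmgf

end ProbabilityTheory

/-- If `ε₁, …, εₙ` are i.i.d. Rademacher random variables and
`B ⊆ ℝⁿ` is a finite nonempty set, then
`E[sup_{b ∈ B} ∑ i, εᵢ bᵢ] ≤ (max_{b ∈ B} ‖b‖₂) * √(2 log |B|)`. -/
theorem stmt0 {Ω : Type*} [MeasurableSpace Ω] (P : Measure Ω) [IsProbabilityMeasure P]
    (n : ℕ) (ε : Fin n → Ω → ℝ) (hmeas : ∀ i, Measurable (ε i))
    (hindep : iIndepFun ε P)
    (hlaw : ∀ i, P.map (ε i) =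
      (1 / 2 : ℝ≥0∞) • Measure.dirac (1 : ℝ) + (1 / 2 : ℝ≥0∞) • Measure.dirac (-1 : ℝ))
    (B : Finset (EuclideanSpace ℝ (Fin n))) (hB : B.Nonempty) :
    ∫ ω, B.sup' hB (fun b => ∑ i, ε i ω * b i) ∂P
      ≤ (B.sup' hB fun b => ‖b‖) * Real.sqrt (2 * Real.log B.card) := by
  have hε (i : Fin n) : HasSubgaussianMGF (ε i) 1 P :=
    (HasSubgaussianMGF.id_map_iff (hmeas i).aemeasurable).mp
      (hlaw i ▸ hasSubgaussianMGF_id_rademacher)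
  have hσ : ((B.sup' hB (‖·‖₊) : ℝ≥0) : ℝ) = B.sup' hB (‖·‖) :=
    Finset.apply_sup'_eq_sup'_comp hB _ fun _ _ ↦ NNReal.coe_max _ _
  rw [← hσ]
  exact integral_sup'_le_of_hasSubgaussianMGF hB fun b hb ↦
    (hasSubgaussianMGF_sum_mul_of_iIndepFun hindep hε b).mono
      (by gcongr; exact Finset.le_sup' _ hb)
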